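/- arXiv:2201.06437 — 2 statements merged into one kernel-verified Lean document; each statement's English description precedes it below -/
import Mathlib

section
/- If each one-hop relevance probability along a path satisfies π^{n-1}_{n,s} + π^{n-1}_{n,s'} ≤ c < 1 for some constant c, then the cumulative structural-balance probability π^0_{m,s} + π^0_{m,s'} ≤ c^m, so it decreases exponentially (tends to 0) as the path length m grows. -/
open Filter

/-- If every one-hop total relevance probability is at most c < 1 then the cumulative
structural-balance probability is at most c^m, hence tends to 0 with path length. -/
theorem siggan_structure_aware_decay
    (a b P Q : ℕ → ℝ) (c : ℝ)
    (ha : ∀ n, 0 ≤ a n) (hb : ∀ n, 0 ≤ b n)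
    (hc : c < 1) (hab : ∀ n, 1 ≤ n → a n + b n ≤ c)
    (hP0 : P 0 = 1) (hQ0 : Q 0 = 0)
    (hP : ∀ m, 1 ≤ m → P m = P (m - 1) * a m + Q (m - 1) * b m)
    (hQ : ∀ m, 1 ≤ m → Q m = P (m - 1) * b m + Q (m - 1) * a m) :
    (∀ m, P m + Q m ≤ c ^ m) ∧
      Tendsto (fun m => P m + Q m) atTop (nhds 0) := by
  have hc0 : 0 ≤ c := le_trans (add_nonneg (ha 1) (hb 1)) (hab 1 le_rfl)
  have hnn : ∀ m, 0 ≤ P m ∧ 0 ≤ Q m := by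
    intro m
    induction m with
    | zero => simp [hP0, hQ0]
    | succ n ih =>
      have h1 : 1 ≤ n + 1 := Nat.le_add_left 1 n
      rw [hP (n + 1) h1, hQ (n + 1) h1]
      simp only [Nat.add_sub_cancel]
      constructor
      · exact add_nonneg (mul_nonneg ih.1 (ha _)) (mul_nonneg ih.2 (hb _))
      · exact add_nonneg (mul_nonneg ih.1 (hb _)) (mul_nonneg ih.2 (ha _))
  have hbound : ∀ m, P m + Q m ≤ c ^ m := by
    intro m
    induction m with
    | zero => simp [hP0, hQ0]
    | succ n ih =>
      have h1 : 1 ≤ n + 1 := Nat.le_add_left 1 n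
      rw [hP (n + 1) h1, hQ (n + 1) h1]
      simp only [Nat.add_sub_cancel]
      have key : P n * a (n+1) + Q n * b (n+1) + (P n * b (n+1) + Q n * a (n+1))
          = (P n + Q n) * (a (n+1) + b (n+1)) := by ring
      rw [key, pow_succ]
      have hPQnn : 0 ≤ P n + Q n := add_nonneg (hnn n).1 (hnn n).2
      calc (P n + Q n) * (a (n+1) + b (n+1)) ≤ (P n + Q n) * c :=
            mul_le_mul_of_nonneg_left (hab (n+1) h1) hPQnn
        _ ≤ c ^ n * c := mul_le_mul_of_nonneg_right ih hc0
  refine ⟨hbound, ?_⟩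
  have htend : Tendsto (fun m : ℕ => c ^ m) atTop (nhds 0) :=
    tendsto_pow_atTop_nhds_zero_of_lt_one hc0 hc
  exact squeeze_zero (fun m => add_nonneg (hnn m).1 (hnn m).2) hbound htend
end

section
/- Let T be a finite rooted tree where each edge (parent u, child w) carries nonnegative weights (a_{uw}, b_{uw}) with the property that for each internal node u, the sum over edges incident to u (to its parent and to its children) of (a + b) equals 1, and for each leaf u, a_{u,parent} + b_{u,parent} = 1. Define for each non-root node w at the end of a root path the pair (P_s(w), P_{s'}(w)) by the structural-balance recursion along the path, and the generator score J_s(w) = P_s(w)·a_{w,parent} + P_{s'}(w)·b_{w,parent}, J_{s'}(w) = P_s(w)·b_{w,parent} + P_{s'}(w)·a_{w,parent}. Then Σ over all non-root nodes w of (J_s(w) + J_{s'}(w)) = 1. -/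
open Finset

/-- SigGAN Theorem 1 (normalization): in a finite rooted tree whose edge weights are
locally normalized at every node, the modified signed softmax scores of all non-root
nodes (built by the structural-balance recursion along root paths, combined with the
reverse-edge weights) sum to 1. -/
theorem siggan_modified_softmax_normalized
    {V : Type*} [Fintype V] [DecidableEq V]
    (r : V) (parent : V → V) (depth : V → ℕ)
    (hroot : parent r = r) (hdepth0 : depth r = 0)
    (hdepth : ∀ v, v ≠ r → depth v = depth (parent v) + 1)
    -- down-weights on the edge parent v → v (sign-specific relevance of v w.r.t. its parent)
    (a b : V → ℝ) (ha : ∀ v, 0 ≤ a v) (hb : ∀ v, 0 ≤ b v)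
    -- up-weights on the edge v → parent v (sign-specific relevance of the parent w.r.t. v)
    (au bu : V → ℝ) (hau : ∀ v, 0 ≤ au v) (hbu : ∀ v, 0 ≤ bu v)
    -- local normalization at the root and at every other node
    (hnormr : ∑ w ∈ Finset.univ.filter (fun w => parent w = r ∧ w ≠ r), (a w + b w) = 1)
    (hnorm : ∀ u, u ≠ r →
      au u + bu u + ∑ w ∈ Finset.univ.filter (fun w => parent w = u ∧ w ≠ r), (a w + b w) = 1)
    -- cumulative structural-balance pair along the root path
    (P Q : V → ℝ)
    (hP1 : ∀ v, v ≠ r → parent v = r → P v = a v ∧ Q v = b v)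
    (hPrec : ∀ v, v ≠ r → parent v ≠ r →
      P v = P (parent v) * a v + Q (parent v) * b v ∧
      Q v = P (parent v) * b v + Q (parent v) * a v)
    -- modified softmax scores
    (Js Js' : V → ℝ)
    (hJs : ∀ v, Js v = P v * au v + Q v * bu v)
    (hJs' : ∀ v, Js' v = P v * bu v + Q v * au v) :
    ∑ v ∈ Finset.univ.filter (fun v => v ≠ r), (Js v + Js' v) = 1 := by

  classical
  set S : V → ℝ := fun v => P v + Q v with hSdef
  -- Step 1: rewrite each summand using local normalization
  have key : ∀ v ∈ Finset.univ.filter (fun v : V => v ≠ r),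
      Js v + Js' v = S v - ∑ w ∈ Finset.univ.filter (fun w => parent w = v ∧ w ≠ r),
        S v * (a w + b w) := by
    intro v hv
    simp only [Finset.mem_filter] at hv
    have hn := hnorm v hv.2
    have h2 : au v + bu v
        = 1 - ∑ w ∈ Finset.univ.filter (fun w => parent w = v ∧ w ≠ r), (a w + b w) := by
      linarith
    have h1 : Js v + Js' v = S v * (au v + bu v) := by
      rw [hJs, hJs']; simp only [hSdef]; ring
    rw [h1, h2, mul_sub, mul_one, Finset.mul_sum]
  rw [Finset.sum_congr rfl key, Finset.sum_sub_distrib]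
  -- Step 2: the double sum equals the sum of S over non-root nodes with non-root parent
  have hfiber : ∀ v ∈ Finset.univ.filter (fun v : V => v ≠ r),
      ∑ w ∈ Finset.univ.filter (fun w => parent w = v ∧ w ≠ r), S v * (a w + b w)
      = ∑ w ∈ Finset.univ.filter (fun w => parent w = v ∧ w ≠ r), S w := by
    intro v hv
    simp only [Finset.mem_filter] at hv
    refine Finset.sum_congr rfl ?_
    intro w hw
    simp only [Finset.mem_filter] at hw
    have hpw : parent w ≠ r := by rw [hw.2.1]; exact hv.2
    obtain ⟨hPw, hQw⟩ := hPrec w hw.2.2 hpw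
    simp only [hSdef, hPw, hQw, hw.2.1]
    ring
  rw [Finset.sum_congr rfl hfiber]
  have hdouble : ∑ v ∈ Finset.univ.filter (fun v : V => v ≠ r),
      ∑ w ∈ Finset.univ.filter (fun w => parent w = v ∧ w ≠ r), S w
      = ∑ w ∈ Finset.univ.filter (fun w : V => w ≠ r ∧ parent w ≠ r), S w := by
    rw [← Finset.sum_fiberwise_of_maps_to (g := parent)
      (s := Finset.univ.filter (fun w : V => w ≠ r ∧ parent w ≠ r))
      (t := Finset.univ.filter (fun v : V => v ≠ r)) (f := S)
      (by intro w hw; simp only [Finset.mem_filter] at hw ⊢; exact ⟨Finset.mem_univ _, hw.2.2⟩)]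
    refine Finset.sum_congr rfl ?_
    intro v hv
    simp only [Finset.mem_filter] at hv
    refine Finset.sum_congr ?_ (fun _ _ => rfl)
    ext w
    simp only [Finset.mem_filter, Finset.mem_univ, true_and]
    constructor
    · rintro ⟨hpw, hwr⟩
      exact ⟨⟨hwr, hpw ▸ hv.2⟩, hpw⟩
    · rintro ⟨⟨hwr, _⟩, hpw⟩
      exact ⟨hpw, hwr⟩
  rw [hdouble]
  -- Step 3: split the first sum by whether parent = r
  have hsplit : ∑ v ∈ Finset.univ.filter (fun v : V => v ≠ r), S v
      = ∑ v ∈ Finset.univ.filter (fun v : V => v ≠ r ∧ parent v = r), S v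
        + ∑ v ∈ Finset.univ.filter (fun v : V => v ≠ r ∧ parent v ≠ r), S v := by
    rw [← Finset.sum_filter_add_sum_filter_not (Finset.univ.filter (fun v : V => v ≠ r))
      (fun v => parent v = r) S]
    congr 1 <;> (congr 1; ext w; simp only [Finset.mem_filter, Finset.mem_univ, true_and,
      Finset.filter_filter] <;> tauto)
  rw [hsplit]
  have hfirst : ∑ v ∈ Finset.univ.filter (fun v : V => v ≠ r ∧ parent v = r), S v = 1 := by
    rw [← hnormr]
    refine Finset.sum_congr ?_ ?_
    · ext w; simp only [Finset.mem_filter, Finset.mem_univ, true_and]; tauto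
    · intro w hw
      simp only [Finset.mem_filter] at hw
      obtain ⟨hPw, hQw⟩ := hP1 w hw.2.2 hw.2.1
      simp [hSdef, hPw, hQw]
  linarith [hfirst]
end
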